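/- arXiv:1611.01556 — 7 statements merged into one kernel-verified Lean document; each statement's English description precedes it below -/
import Mathlib

section
/- If the series ∑_k 1/a_n(k) converges for each n, and the infinite products ∏_k c_{1,n}(k) and ∏_k c_{2,n}(k) converge to nonzero limits, then the series ∑_k ‖C_{m,n}(k) − I‖ converges (for any fixed m, n), and consequently the infinite product of matrices C_{m,n} = ∏_{k=0}^∞ C_{m,n}(k) (products taken from right to left) converges to an invertible matrix. -/
open Matrix Filter Finset

/-- The matrix `C_{m,n}(k)` from the quantum solid torus Dirac operator. -/
noncomputable def Cmat (a c1 c2 : ℕ → ℕ → ℝ) (m : ℤ) (n k : ℕ) :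
    Matrix (Fin 2) (Fin 2) ℝ :=
  !![1 / c1 n k, -(m : ℝ) / (a (n + 1) k * c1 n k);
     -(m : ℝ) / (a n (k + 1) * c1 n k),
     c2 n k + (m : ℝ) ^ 2 / (a n (k + 1) * a (n + 1) k * c1 n k)]


/-- Right-to-left partial product `C (k-1) * ⋯ * C 0`. -/
noncomputable def pprod (C : ℕ → Matrix (Fin 2) (Fin 2) ℝ) : ℕ → Matrix (Fin 2) (Fin 2) ℝ
  | 0 => 1
  | k + 1 => C k * pprod C k

attribute [local instance] Matrix.normedAddCommGroup

open Topology

/-!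
Write `C k = 1 + A k` and `P k = C (k-1) ⋯ C 0`. In any normed ring
`P (k+1) - P k = A k (P k - 1) + A k`, so `1 + ‖P k - 1‖ ≤ exp (∑ ‖A j‖)`: the partial products
are bounded and Cauchy when `∑ ‖A k‖ < ∞`. If every `C k` is a unit, pick `K` with tail sum
`< log 2`; the tail products then converge to some `Q` with `‖Q - 1‖ < 1`, a unit, and the limit is
`Q * P K`. On matrices this runs with the submultiplicative `linftyOp` norm, equivalent to the
entrywise one.

For `C_{m,n}(k)`, `0 < c ≤ 1` and `∏ c → J ≠ 0` give `J ≤ c` and `∑ (1 - c) ≤ -log J`; these bound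
the entries of `C - 1` together with `1 / a_n` and `1 / a_{n+1}`, and `det C_{m,n}(k) = c₂ / c₁`.
-/

section PartialProducts

variable {R : Type*} [NormedRing R] {C P : ℕ → R}

theorem norm_succ_sub_le (hP : ∀ k, P (k + 1) = C k * P k) (k : ℕ) :
    ‖P (k + 1) - P k‖ ≤ ‖C k - 1‖ * (1 + ‖P k - 1‖) := by
  have h : P (k + 1) - P k = (C k - 1) * (P k - 1) + (C k - 1) := by
    rw [hP]; noncomm_ring
  calc ‖P (k + 1) - P k‖ ≤ ‖C k - 1‖ * ‖P k - 1‖ + ‖C k - 1‖ := by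
        rw [h]; exact (norm_add_le _ _).trans (add_le_add (norm_mul_le _ _) le_rfl)
    _ = ‖C k - 1‖ * (1 + ‖P k - 1‖) := by ring

theorem one_add_norm_sub_one_le_exp_sum (hP0 : P 0 = 1) (hP : ∀ k, P (k + 1) = C k * P k)
    (k : ℕ) : 1 + ‖P k - 1‖ ≤ Real.exp (∑ j ∈ range k, ‖C j - 1‖) := by
  induction k with
  | zero => simp [hP0]
  | succ k ih =>
    calc 1 + ‖P (k + 1) - 1‖ ≤ (1 + ‖C k - 1‖) * (1 + ‖P k - 1‖) := by
          nlinarith [norm_succ_sub_le hP k, norm_sub_le_norm_sub_add_norm_sub (P (k + 1)) (P k) 1]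
      _ ≤ Real.exp ‖C k - 1‖ * Real.exp (∑ j ∈ range k, ‖C j - 1‖) := by
          gcongr
          linarith [Real.add_one_le_exp ‖C k - 1‖]
      _ = Real.exp (∑ j ∈ range (k + 1), ‖C j - 1‖) := by
          rw [sum_range_succ, Real.exp_add, mul_comm]

theorem cauchySeq_of_summable_norm_sub_one (hP0 : P 0 = 1) (hP : ∀ k, P (k + 1) = C k * P k)
    (hs : Summable fun k => ‖C k - 1‖) : CauchySeq P := by
  refine cauchySeq_of_dist_le_of_summable (fun k => ‖C k - 1‖ * Real.exp (∑' j, ‖C j - 1‖))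
    (fun k => ?_) (hs.mul_right _)
  rw [dist_comm, dist_eq_norm]
  refine (norm_succ_sub_le hP k).trans (mul_le_mul_of_nonneg_left ?_ (norm_nonneg _))
  exact (one_add_norm_sub_one_le_exp_sum hP0 hP k).trans
    (Real.exp_le_exp.2 (hs.sum_le_tsum _ fun j _ => norm_nonneg _))

theorem norm_sub_one_le_of_tendsto (hP0 : P 0 = 1) (hP : ∀ k, P (k + 1) = C k * P k)
    (hs : Summable fun k => ‖C k - 1‖) {L : R} (hL : Tendsto P atTop (𝓝 L)) :
    ‖L - 1‖ ≤ Real.exp (∑' k, ‖C k - 1‖) - 1 := by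
  have hlim : Tendsto (fun k => ‖P k - 1‖) atTop (𝓝 ‖L - 1‖) := (hL.sub_const 1).norm
  refine le_of_tendsto' hlim fun k => ?_
  have := one_add_norm_sub_one_le_exp_sum hP0 hP k
  have := Real.exp_le_exp.2 (hs.sum_le_tsum (range k) fun j _ => norm_nonneg (C j - 1))
  linarith

theorem isUnit_of_tendsto_of_summable_norm_sub_one [HasSummableGeomSeries R]
    (hP0 : P 0 = 1) (hP : ∀ k, P (k + 1) = C k * P k) (hC : ∀ k, IsUnit (C k))
    (hs : Summable fun k => ‖C k - 1‖) {L : R} (hL : Tendsto P atTop (𝓝 L)) : IsUnit L := by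
  have hPunit : ∀ k, IsUnit (P k) := by
    intro k
    induction k with
    | zero => simp [hP0]
    | succ k ih => rw [hP]; exact (hC k).mul ih
  obtain ⟨K, hK⟩ : ∃ K, ∑' k, ‖C (k + K) - 1‖ < Real.log 2 :=
    ((tendsto_sum_nat_add fun k => ‖C k - 1‖).eventually_lt_const
      (Real.log_pos one_lt_two)).exists
  obtain ⟨u, hu⟩ := hPunit K
  -- the tail product `C (j + K - 1) * ⋯ * C K`
  set Q : ℕ → R := fun j => P (j + K) * ↑u⁻¹
  have hQ0 : Q 0 = 1 := by simp [Q, ← hu]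
  have hQ : ∀ j, Q (j + 1) = C (j + K) * Q j := by
    intro j; simp only [Q, add_right_comm j 1 K, hP, mul_assoc]
  have hQL : Tendsto Q atTop (𝓝 (L * ↑u⁻¹)) :=
    (hL.comp (tendsto_add_atTop_nat K)).mul_const _
  have hnorm : ‖1 - L * ↑u⁻¹‖ < 1 := by
    rw [norm_sub_rev]
    refine (norm_sub_one_le_of_tendsto hQ0 hQ ((summable_nat_add_iff K).2 hs) hQL).trans_lt ?_
    rw [sub_lt_iff_lt_add, one_add_one_eq_two, ← Real.lt_log_iff_exp_lt two_pos]
    exact hK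
  have hunit : IsUnit (L * ↑u⁻¹) := by simpa using isUnit_one_sub_of_norm_lt_one hnorm
  simpa using hunit.mul u.isUnit

theorem exists_isUnit_tendsto_of_summable_norm_sub_one [CompleteSpace R]
    (hP0 : P 0 = 1) (hP : ∀ k, P (k + 1) = C k * P k) (hC : ∀ k, IsUnit (C k))
    (hs : Summable fun k => ‖C k - 1‖) : ∃ L, IsUnit L ∧ Tendsto P atTop (𝓝 L) := by
  obtain ⟨L, hL⟩ := cauchySeq_tendsto_of_complete (cauchySeq_of_summable_norm_sub_one hP0 hP hs)
  exact ⟨L, isUnit_of_tendsto_of_summable_norm_sub_one hP0 hP hC hs hL, hL⟩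

end PartialProducts

theorem Matrix.exists_isUnit_tendsto_of_summable_norm_sub_one {n α : Type*} [Fintype n]
    [DecidableEq n] [NormedRing α] [CompleteSpace α] {C P : ℕ → Matrix n n α} (hP0 : P 0 = 1)
    (hP : ∀ k, P (k + 1) = C k * P k) (hC : ∀ k, IsUnit (C k))
    (hs : Summable fun k => ‖C k - 1‖) : ∃ L, IsUnit L ∧ Tendsto P atTop (𝓝 L) := by
  have hle (A : Matrix n n α) :
      ((univ.sup fun i => ∑ j, ‖A i j‖₊ : NNReal) : ℝ) ≤ Fintype.card n * ‖A‖ := by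
    have : (univ.sup fun i => ∑ j, ‖A i j‖₊) ≤ Fintype.card n * ‖A‖₊ :=
      Finset.sup_le fun i _ => by
        simpa using
          sum_le_card_nsmul univ _ _ fun j _ => nnnorm_entry_le_entrywise_sup_nnnorm A
    exact_mod_cast this
  let inst : NormedRing (Matrix n n α) := Matrix.linftyOpNormedRing
  have : @CompleteSpace (Matrix n n α) inst.toUniformSpace :=
    inferInstanceAs (CompleteSpace (n → n → α))
  have hs' : Summable fun k => ‖C k - 1‖ := by
    refine .of_nonneg_of_le (fun _ => norm_nonneg _) (fun k => ?_)
      (hs.mul_left (Fintype.card n : ℝ))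
    rw [linfty_opNorm_def]
    exact hle _
  exact _root_.exists_isUnit_tendsto_of_summable_norm_sub_one hP0 hP hC hs'

section ProductOfReals

variable {c : ℕ → ℝ} {J : ℝ}

theorem antitone_prod_range_of_le_one (hc0 : ∀ k, 0 < c k) (hc1 : ∀ k, c k ≤ 1) :
    Antitone fun K => ∏ k ∈ range K, c k :=
  antitone_nat_of_succ_le fun K => by
    rw [prod_range_succ]
    exact mul_le_of_le_one_right (prod_nonneg fun k _ => (hc0 k).le) (hc1 K)

theorem pos_of_tendsto_prod_range (hc0 : ∀ k, 0 < c k) (hJ : J ≠ 0)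
    (hT : Tendsto (fun K => ∏ k ∈ range K, c k) atTop (𝓝 J)) : 0 < J :=
  (ge_of_tendsto' hT fun _ => (prod_pos fun k _ => hc0 k).le).lt_of_ne' hJ

theorem le_of_tendsto_prod_range (hc0 : ∀ k, 0 < c k) (hc1 : ∀ k, c k ≤ 1)
    (hT : Tendsto (fun K => ∏ k ∈ range K, c k) atTop (𝓝 J)) (k : ℕ) : J ≤ c k :=
  calc J ≤ ∏ j ∈ range (k + 1), c j :=
        (antitone_prod_range_of_le_one hc0 hc1).le_of_tendsto hT _
    _ = (∏ j ∈ range k, c j) * c k := prod_range_succ _ _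
    _ ≤ c k :=
      mul_le_of_le_one_left (hc0 k).le (prod_le_one (fun j _ => (hc0 j).le) fun j _ => hc1 j)

theorem summable_one_sub_of_tendsto_prod_range (hc0 : ∀ k, 0 < c k) (hc1 : ∀ k, c k ≤ 1)
    (hJ : 0 < J) (hT : Tendsto (fun K => ∏ k ∈ range K, c k) atTop (𝓝 J)) :
    Summable fun k => 1 - c k :=
  summable_of_sum_range_le (c := -Real.log J) (fun k => sub_nonneg.2 (hc1 k)) fun K =>
    calc ∑ k ∈ range K, (1 - c k) ≤ ∑ k ∈ range K, -Real.log (c k) :=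
          sum_le_sum fun k _ => by linarith [Real.log_le_sub_one_of_pos (hc0 k)]
      _ = -Real.log (∏ k ∈ range K, c k) := by
          rw [Real.log_prod fun k _ => (hc0 k).ne', sum_neg_distrib]
      _ ≤ -Real.log J := neg_le_neg <| Real.log_le_log hJ <|
          (antitone_prod_range_of_le_one hc0 hc1).le_of_tendsto hT K

end ProductOfReals

theorem Matrix.summable_norm_of_summable_norm_apply {ι m n α : Type*} [Fintype m] [Fintype n]
    [NormedAddCommGroup α] {A : ι → Matrix m n α} (h : ∀ i j, Summable fun k => ‖A k i j‖) :
    Summable fun k => ‖A k‖ := by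
  refine .of_nonneg_of_le (f := fun k => ∑ i, ∑ j, ‖A k i j‖) (fun _ => norm_nonneg _)
    (fun k => (norm_le_iff (by positivity)).2 fun i j => ?_)
    (summable_sum fun i _ => summable_sum fun j _ => h i j)
  exact (single_le_sum (f := fun j => ‖A k i j‖) (fun _ _ => norm_nonneg _) (mem_univ j)).trans
    (single_le_sum (f := fun i => ∑ j, ‖A k i j‖) (fun _ _ => by positivity) (mem_univ i))

theorem det_Cmat {a c1 c2 : ℕ → ℕ → ℝ} (ha : ∀ n k, a n k ≠ 0) (hc1 : ∀ n k, c1 n k ≠ 0)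
    (m : ℤ) (n k : ℕ) : (Cmat a c1 c2 m n k).det = c2 n k / c1 n k := by
  have := ha n (k + 1); have := ha (n + 1) k; have := hc1 n k
  rw [Cmat, det_fin_two_of]
  field_simp
  ring

theorem summable_norm_Cmat_sub_one {a c1 c2 : ℕ → ℕ → ℝ} (m : ℤ) (n : ℕ) {J : ℝ}
    (ha : ∀ n k, 0 < a n k) (hsum : ∀ n, Summable fun k => 1 / a n k) (hJ : 0 < J)
    (hJc1 : ∀ k, J ≤ c1 n k) (hc1 : ∀ k, c1 n k ≤ 1) (hc1s : Summable fun k => 1 - c1 n k)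
    (hc2 : ∀ k, c2 n k ≤ 1) (hc2s : Summable fun k => 1 - c2 n k) :
    Summable fun k => ‖Cmat a c1 c2 m n k - 1‖ := by
  have hc1pos k : 0 < c1 n k := hJ.trans_le (hJc1 k)
  have hinv n k : 0 < 1 / a n k := one_div_pos.2 (ha n k)
  have hsum' : Summable fun k => 1 / a n (k + 1) := (summable_nat_add_iff 1).2 (hsum n)
  have hB k : 1 / a n (k + 1) ≤ ∑' j, 1 / a n j := (hsum n).le_tsum _ fun j _ => (hinv n j).le
  have hoff (x : ℕ → ℝ) (hx : ∀ k, 0 < x k) (hxs : Summable fun k => 1 / x k) :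
      Summable fun k => ‖-(m : ℝ) / (x k * c1 n k)‖ := by
    refine .of_nonneg_of_le (fun _ => norm_nonneg _) (fun k => ?_) (hxs.mul_left (|(m : ℝ)| / J))
    have := hx k; have := hJc1 k; have := hc1pos k
    rw [Real.norm_eq_abs, abs_div, abs_neg, abs_of_pos (mul_pos (hx k) (hc1pos k)),
      div_mul_div_comm, mul_one]
    exact div_le_div_of_nonneg_left (abs_nonneg _) (by positivity) (by nlinarith)
  refine summable_norm_of_summable_norm_apply ?_
  simp only [Fin.forall_fin_two, Cmat, Matrix.sub_apply, of_apply, cons_val', cons_val_zero,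
    cons_val_one, cons_val_fin_one, Matrix.one_apply_eq, Matrix.one_apply_ne zero_ne_one,
    Matrix.one_apply_ne one_ne_zero, sub_zero]
  refine ⟨⟨?_, hoff _ (ha (n + 1)) (hsum (n + 1))⟩, hoff _ (fun k => ha n (k + 1)) hsum', ?_⟩
  · refine .of_nonneg_of_le (fun _ => norm_nonneg _) (fun k => ?_) (hc1s.div_const J)
    have := hc1 k; have := hc1pos k
    rw [Real.norm_eq_abs, div_sub_one this.ne', abs_of_nonneg (by positivity)]
    exact div_le_div_of_nonneg_left (by linarith) hJ (hJc1 k)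
  · set B := ∑' j, 1 / a n j
    refine .of_nonneg_of_le (fun _ => norm_nonneg _) (fun k => ?_)
      (hc2s.add ((hsum (n + 1)).mul_left ((m : ℝ) ^ 2 * B / J)))
    have hq : (m : ℝ) ^ 2 / (a n (k + 1) * a (n + 1) k * c1 n k) ≤
        (m : ℝ) ^ 2 * B / J * (1 / a (n + 1) k) := by
      have := ha n (k + 1); have := ha (n + 1) k; have := hc1pos k
      calc (m : ℝ) ^ 2 / (a n (k + 1) * a (n + 1) k * c1 n k)
          = (m : ℝ) ^ 2 * (1 / a n (k + 1)) / c1 n k * (1 / a (n + 1) k) := by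
            field_simp
        _ ≤ (m : ℝ) ^ 2 * B / J * (1 / a (n + 1) k) := by
            have : 0 ≤ B := (hinv n (k + 1)).le.trans (hB k)
            gcongr
            exacts [hB k, hJc1 k]
    have := hc2 k; have := ha n (k + 1); have := ha (n + 1) k; have := hc1pos k
    rw [Real.norm_eq_abs, abs_le]
    have hq0 : 0 ≤ (m : ℝ) ^ 2 / (a n (k + 1) * a (n + 1) k * c1 n k) := by positivity
    constructor <;> nlinarith

theorem stmt_1 (a c1 c2 : ℕ → ℕ → ℝ)
    (ha : ∀ n k, 0 < a n k)
    (hc1 : ∀ n k, 0 < c1 n k ∧ c1 n k ≤ 1)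
    (hc2 : ∀ n k, 0 < c2 n k ∧ c2 n k ≤ 1)
    (hsum : ∀ n, Summable fun k => 1 / a n k)
    (hprod1 : ∀ n, ∃ J : ℝ, J ≠ 0 ∧
      Tendsto (fun K => ∏ k ∈ Finset.range K, c1 n k) atTop (nhds J))
    (hprod2 : ∀ n, ∃ J : ℝ, J ≠ 0 ∧
      Tendsto (fun K => ∏ k ∈ Finset.range K, c2 n k) atTop (nhds J))
    (m : ℤ) (n : ℕ) :
    Summable (fun k => ‖Cmat a c1 c2 m n k - 1‖) ∧
      ∃ L : Matrix (Fin 2) (Fin 2) ℝ, IsUnit L ∧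
        Tendsto (pprod fun k => Cmat a c1 c2 m n k) atTop (nhds L) := by
  obtain ⟨J₁, hJ₁, hT₁⟩ := hprod1 n
  obtain ⟨J₂, hJ₂, hT₂⟩ := hprod2 n
  have hc1₀ k : 0 < c1 n k := (hc1 n k).1
  have hc2₀ k : 0 < c2 n k := (hc2 n k).1
  have hJ₁pos := pos_of_tendsto_prod_range hc1₀ hJ₁ hT₁
  have hs : Summable fun k => ‖Cmat a c1 c2 m n k - 1‖ :=
    summable_norm_Cmat_sub_one m n ha hsum hJ₁pos
      (le_of_tendsto_prod_range hc1₀ (fun k => (hc1 n k).2) hT₁) (fun k => (hc1 n k).2)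
      (summable_one_sub_of_tendsto_prod_range hc1₀ (fun k => (hc1 n k).2) hJ₁pos hT₁)
      (fun k => (hc2 n k).2)
      (summable_one_sub_of_tendsto_prod_range hc2₀ (fun k => (hc2 n k).2)
        (pos_of_tendsto_prod_range hc2₀ hJ₂ hT₂) hT₂)
  have hunit k : IsUnit (Cmat a c1 c2 m n k) := by
    rw [isUnit_iff_isUnit_det, det_Cmat (fun n k => (ha n k).ne') (fun n k => (hc1 n k).1.ne')]
    exact (div_pos (hc2₀ k) (hc1₀ k)).ne'.isUnit
  exact ⟨hs, Matrix.exists_isUnit_tendsto_of_summable_norm_sub_one rfl (fun _ => rfl) hunit hs⟩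
end

section
/- For every k, the partial product P_k = ∏_{i=0}^{k} C_{m,n}(i) has the following sign structure when m > 0: the (1,1) entry is positive and has the form ∏_{i=0}^k 1/c_{1,n}(i) plus a polynomial in m^2 with nonnegative coefficients; the (1,2) and (2,1) entries are of the form −m times a polynomial in m^2 with nonnegative coefficients; and the (2,2) entry equals ∏_{i=0}^k c_{2,n}(i) plus a polynomial in m^2 with nonnegative coefficients. In particular, for m > 0 all off-diagonal entries of P_k are ≤ 0 and both diagonal entries are > 0. -/
open Matrix Filter Finset

lemma evalNN {p : Polynomial ℝ} (hp : ∀ i, 0 ≤ p.coeff i) {x : ℝ} (hx : 0 ≤ x) :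
    0 ≤ p.eval x := by
  rw [Polynomial.eval_eq_sum_range]
  exact Finset.sum_nonneg fun i _ => mul_nonneg (hp i) (pow_nonneg hx i)

lemma coeffNN_add {p q : Polynomial ℝ} (hp : ∀ i, 0 ≤ p.coeff i) (hq : ∀ i, 0 ≤ q.coeff i) :
    ∀ i, 0 ≤ (p + q).coeff i := fun i => by
  rw [Polynomial.coeff_add]; exact add_nonneg (hp i) (hq i)

lemma coeffNN_mul {p q : Polynomial ℝ} (hp : ∀ i, 0 ≤ p.coeff i) (hq : ∀ i, 0 ≤ q.coeff i) :
    ∀ i, 0 ≤ (p * q).coeff i := fun i => by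
  rw [Polynomial.coeff_mul]
  exact Finset.sum_nonneg fun x _ => mul_nonneg (hp x.1) (hq x.2)

lemma coeffNN_C {r : ℝ} (hr : 0 ≤ r) : ∀ i, 0 ≤ (Polynomial.C r).coeff i := fun i => by
  rw [Polynomial.coeff_C]; split <;> simp [hr]

lemma coeffNN_X : ∀ i, 0 ≤ (Polynomial.X : Polynomial ℝ).coeff i := fun i => by
  rw [Polynomial.coeff_X]; split <;> norm_num

lemma key (a c1 c2 : ℕ → ℕ → ℝ)
    (ha : ∀ n k, 0 < a n k)
    (hc1 : ∀ n k, 0 < c1 n k ∧ c1 n k ≤ 1)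
    (hc2 : ∀ n k, 0 < c2 n k ∧ c2 n k ≤ 1)
    (n : ℕ) :
    ∀ k : ℕ, ∃ q0 q1 q2 q3 : Polynomial ℝ,
      (∀ i, 0 ≤ q0.coeff i) ∧ (∀ i, 0 ≤ q1.coeff i) ∧
      (∀ i, 0 ≤ q2.coeff i) ∧ (∀ i, 0 ≤ q3.coeff i) ∧
      ∀ m : ℤ,
        pprod (fun j => Cmat a c1 c2 m n j) (k + 1) 0 0 =
            (∏ i ∈ Finset.range (k + 1), 1 / c1 n i) + q0.eval ((m : ℝ) ^ 2) ∧
        pprod (fun j => Cmat a c1 c2 m n j) (k + 1) 0 1 =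
            -(m : ℝ) * q1.eval ((m : ℝ) ^ 2) ∧
        pprod (fun j => Cmat a c1 c2 m n j) (k + 1) 1 0 =
            -(m : ℝ) * q2.eval ((m : ℝ) ^ 2) ∧
        pprod (fun j => Cmat a c1 c2 m n j) (k + 1) 1 1 =
            (∏ i ∈ Finset.range (k + 1), c2 n i) + q3.eval ((m : ℝ) ^ 2) := by
  intro k
  induction k with
  | zero =>
    have h1a := ha (n + 1) 0
    have h2a := ha n 1
    have h3c := (hc1 n 0).1
    refine ⟨0, Polynomial.C (1 / (a (n + 1) 0 * c1 n 0)),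
        Polynomial.C (1 / (a n 1 * c1 n 0)),
        Polynomial.C (1 / (a n 1 * a (n + 1) 0 * c1 n 0)) * Polynomial.X, ?_, ?_, ?_, ?_, ?_⟩
    · simp
    · exact coeffNN_C (by positivity)
    · exact coeffNN_C (by positivity)
    · exact coeffNN_mul (coeffNN_C (by positivity)) coeffNN_X
    · intro m
      have hone : pprod (fun j => Cmat a c1 c2 m n j) 1 = Cmat a c1 c2 m n 0 := by
        show Cmat a c1 c2 m n 0 * 1 = _
        rw [mul_one]
      rw [hone]
      refine ⟨?_, ?_, ?_, ?_⟩ <;>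
        simp [Cmat, Finset.prod_range_one] <;>
        ring
  | succ k ih =>
    obtain ⟨q0, q1, q2, q3, h0, h1, h2, h3, hm⟩ := ih
    have hA : (0:ℝ) ≤ 1 / c1 n (k + 1) := by
      have := (hc1 n (k + 1)).1; positivity
    have hb : (0:ℝ) ≤ 1 / (a (n + 1) (k + 1) * c1 n (k + 1)) := by
      have := (hc1 n (k + 1)).1; have := ha (n + 1) (k + 1); positivity
    have hcc : (0:ℝ) ≤ 1 / (a n ((k + 1) + 1) * c1 n (k + 1)) := by
      have := (hc1 n (k + 1)).1; have := ha n ((k + 1) + 1); positivity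
    have hd : (0:ℝ) ≤ 1 / (a n ((k + 1) + 1) * a (n + 1) (k + 1) * c1 n (k + 1)) := by
      have := (hc1 n (k + 1)).1; have := ha n ((k + 1) + 1); have := ha (n + 1) (k + 1); positivity
    have hP1 : (0:ℝ) ≤ ∏ i ∈ Finset.range (k + 1), 1 / c1 n i :=
      Finset.prod_nonneg fun i _ => by have := (hc1 n i).1; positivity
    have hP2 : (0:ℝ) ≤ ∏ i ∈ Finset.range (k + 1), c2 n i :=
      Finset.prod_nonneg fun i _ => (hc2 n i).1.le
    have hc2k : (0:ℝ) ≤ c2 n (k + 1) := (hc2 n (k + 1)).1.le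
    refine ⟨Polynomial.C (1 / c1 n (k + 1)) * q0 +
        Polynomial.C (1 / (a (n + 1) (k + 1) * c1 n (k + 1))) * Polynomial.X * q2,
      Polynomial.C (1 / c1 n (k + 1)) * q1 +
        Polynomial.C (1 / (a (n + 1) (k + 1) * c1 n (k + 1))) *
          (Polynomial.C (∏ i ∈ Finset.range (k + 1), c2 n i) + q3),
      Polynomial.C (1 / (a n ((k + 1) + 1) * c1 n (k + 1))) *
          (Polynomial.C (∏ i ∈ Finset.range (k + 1), 1 / c1 n i) + q0) +
        (Polynomial.C (c2 n (k + 1)) +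
          Polynomial.C (1 / (a n ((k + 1) + 1) * a (n + 1) (k + 1) * c1 n (k + 1))) * Polynomial.X) * q2,
      Polynomial.C (1 / (a n ((k + 1) + 1) * c1 n (k + 1))) * Polynomial.X * q1 +
        Polynomial.C (c2 n (k + 1)) * q3 +
        Polynomial.C (1 / (a n ((k + 1) + 1) * a (n + 1) (k + 1) * c1 n (k + 1))) * Polynomial.X *
          (Polynomial.C (∏ i ∈ Finset.range (k + 1), c2 n i) + q3), ?_, ?_, ?_, ?_, ?_⟩
    · exact coeffNN_add (coeffNN_mul (coeffNN_C hA) h0)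
        (coeffNN_mul (coeffNN_mul (coeffNN_C hb) coeffNN_X) h2)
    · exact coeffNN_add (coeffNN_mul (coeffNN_C hA) h1)
        (coeffNN_mul (coeffNN_C hb) (coeffNN_add (coeffNN_C hP2) h3))
    · exact coeffNN_add (coeffNN_mul (coeffNN_C hcc) (coeffNN_add (coeffNN_C hP1) h0))
        (coeffNN_mul (coeffNN_add (coeffNN_C hc2k) (coeffNN_mul (coeffNN_C hd) coeffNN_X)) h2)
    · exact coeffNN_add (coeffNN_add
        (coeffNN_mul (coeffNN_mul (coeffNN_C hcc) coeffNN_X) h1)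
        (coeffNN_mul (coeffNN_C hc2k) h3))
        (coeffNN_mul (coeffNN_mul (coeffNN_C hd) coeffNN_X) (coeffNN_add (coeffNN_C hP2) h3))
    · intro m
      obtain ⟨e0, e1, e2, e3⟩ := hm m
      have hmul : ∀ i j : Fin 2, pprod (fun j => Cmat a c1 c2 m n j) ((k + 1) + 1) i j =
          Cmat a c1 c2 m n (k + 1) i 0 * pprod (fun j => Cmat a c1 c2 m n j) (k + 1) 0 j +
          Cmat a c1 c2 m n (k + 1) i 1 * pprod (fun j => Cmat a c1 c2 m n j) (k + 1) 1 j := by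
        intro i j
        show (Cmat a c1 c2 m n (k + 1) * pprod (fun j => Cmat a c1 c2 m n j) (k + 1)) i j = _
        rw [Matrix.mul_apply, Fin.sum_univ_two]
      have hps1 : ∏ i ∈ Finset.range (k + 1 + 1), 1 / c1 n i =
          (∏ i ∈ Finset.range (k + 1), 1 / c1 n i) * (1 / c1 n (k + 1)) :=
        Finset.prod_range_succ _ _
      have hps2 : ∏ i ∈ Finset.range (k + 1 + 1), c2 n i =
          (∏ i ∈ Finset.range (k + 1), c2 n i) * c2 n (k + 1) :=
        Finset.prod_range_succ _ _
      refine ⟨?_, ?_, ?_, ?_⟩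
      · rw [hmul, e0, e2, hps1]
        simp only [Cmat, Matrix.of_apply, Matrix.cons_val', Matrix.cons_val_zero,
          Matrix.cons_val_one, Matrix.head_cons, Matrix.head_fin_const, Matrix.empty_val',
          Matrix.cons_val_fin_one, Polynomial.eval_add, Polynomial.eval_mul,
          Polynomial.eval_C, Polynomial.eval_X]
        ring
      · rw [hmul, e1, e3]
        simp only [Cmat, Matrix.of_apply, Matrix.cons_val', Matrix.cons_val_zero,
          Matrix.cons_val_one, Matrix.head_cons, Matrix.head_fin_const, Matrix.empty_val',
          Matrix.cons_val_fin_one, Polynomial.eval_add, Polynomial.eval_mul,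
          Polynomial.eval_C, Polynomial.eval_X]
        ring
      · rw [hmul, e0, e2]
        simp only [Cmat, Matrix.of_apply, Matrix.cons_val', Matrix.cons_val_zero,
          Matrix.cons_val_one, Matrix.head_cons, Matrix.head_fin_const, Matrix.empty_val',
          Matrix.cons_val_fin_one, Polynomial.eval_add, Polynomial.eval_mul,
          Polynomial.eval_C, Polynomial.eval_X]
        ring
      · rw [hmul, e1, e3, hps2]
        simp only [Cmat, Matrix.of_apply, Matrix.cons_val', Matrix.cons_val_zero,
          Matrix.cons_val_one, Matrix.head_cons, Matrix.head_fin_const, Matrix.empty_val',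
          Matrix.cons_val_fin_one, Polynomial.eval_add, Polynomial.eval_mul,
          Polynomial.eval_C, Polynomial.eval_X]
        ring

theorem stmt_3 (a c1 c2 : ℕ → ℕ → ℝ)
    (ha : ∀ n k, 0 < a n k)
    (hc1 : ∀ n k, 0 < c1 n k ∧ c1 n k ≤ 1)
    (hc2 : ∀ n k, 0 < c2 n k ∧ c2 n k ≤ 1)
    (n : ℕ) :
    ∀ k : ℕ, (∃ q0 q1 q2 q3 : Polynomial ℝ,
      (∀ i, 0 ≤ q0.coeff i) ∧ (∀ i, 0 ≤ q1.coeff i) ∧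
      (∀ i, 0 ≤ q2.coeff i) ∧ (∀ i, 0 ≤ q3.coeff i) ∧
      ∀ m : ℤ,
        pprod (fun j => Cmat a c1 c2 m n j) (k + 1) 0 0 =
            (∏ i ∈ Finset.range (k + 1), 1 / c1 n i) + q0.eval ((m : ℝ) ^ 2) ∧
        pprod (fun j => Cmat a c1 c2 m n j) (k + 1) 0 1 =
            -(m : ℝ) * q1.eval ((m : ℝ) ^ 2) ∧
        pprod (fun j => Cmat a c1 c2 m n j) (k + 1) 1 0 =
            -(m : ℝ) * q2.eval ((m : ℝ) ^ 2) ∧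
        pprod (fun j => Cmat a c1 c2 m n j) (k + 1) 1 1 =
            (∏ i ∈ Finset.range (k + 1), c2 n i) + q3.eval ((m : ℝ) ^ 2)) ∧
      ∀ m : ℤ, 0 < m →
        pprod (fun j => Cmat a c1 c2 m n j) (k + 1) 0 1 ≤ 0 ∧
        pprod (fun j => Cmat a c1 c2 m n j) (k + 1) 1 0 ≤ 0 ∧
        0 < pprod (fun j => Cmat a c1 c2 m n j) (k + 1) 0 0 ∧
        0 < pprod (fun j => Cmat a c1 c2 m n j) (k + 1) 1 1 := by
  intro k
  obtain ⟨q0, q1, q2, q3, h0, h1, h2, h3, hm⟩ := key a c1 c2 ha hc1 hc2 n k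
  refine ⟨⟨q0, q1, q2, q3, h0, h1, h2, h3, hm⟩, ?_⟩
  intro m hmpos
  obtain ⟨e0, e1, e2, e3⟩ := hm m
  have hm2 : (0:ℝ) ≤ (m : ℝ) ^ 2 := sq_nonneg _
  have hmR : (0:ℝ) < (m : ℝ) := by exact_mod_cast hmpos
  refine ⟨?_, ?_, ?_, ?_⟩
  · rw [e1]
    exact mul_nonpos_of_nonpos_of_nonneg (by linarith) (evalNN h1 hm2)
  · rw [e2]
    exact mul_nonpos_of_nonpos_of_nonneg (by linarith) (evalNN h2 hm2)
  · rw [e0]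
    have : (0:ℝ) < ∏ i ∈ Finset.range (k + 1), 1 / c1 n i :=
      Finset.prod_pos fun i _ => by have := (hc1 n i).1; positivity
    have := evalNN h0 hm2
    linarith
  · rw [e3]
    have : (0:ℝ) < ∏ i ∈ Finset.range (k + 1), c2 n i :=
      Finset.prod_pos fun i _ => (hc2 n i).1
    have := evalNN h3 hm2
    linarith
end

section
/- Define I_{m,n}(k) = (∏_{i=0}^{k-1} C_{m,n}(i)) · v with v = (−1, m/a_n(0))^T. Then for m > 0 and all k ≥ 0, the first component I^{(1)}_{m,n}(k) is negative and the second component I^{(2)}_{m,n}(k) is positive. -/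
open Matrix Filter Finset

theorem stmt_5 (a c1 c2 : ℕ → ℕ → ℝ)
    (ha : ∀ n k, 0 < a n k)
    (hc1 : ∀ n k, 0 < c1 n k ∧ c1 n k ≤ 1)
    (hc2 : ∀ n k, 0 < c2 n k ∧ c2 n k ≤ 1)
    (m : ℤ) (hm : 0 < m) (n : ℕ) :
    ∀ k : ℕ,
      (pprod (fun j => Cmat a c1 c2 m n j) k *ᵥ ![(-1 : ℝ), (m : ℝ) / a n 0]) 0 < 0 ∧
      0 < (pprod (fun j => Cmat a c1 c2 m n j) k *ᵥ ![(-1 : ℝ), (m : ℝ) / a n 0]) 1 := by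
  have hmr : (0:ℝ) < (m:ℝ) := by exact_mod_cast hm
  intro k
  induction k with
  | zero =>
    refine ⟨by simp [pprod], ?_⟩
    simp only [pprod, Matrix.one_mulVec]
    simpa using div_pos hmr (ha n 0)
  | succ k ih =>
    obtain ⟨h0, h1⟩ := ih
    set w := pprod (fun j => Cmat a c1 c2 m n j) k *ᵥ ![(-1 : ℝ), (m : ℝ) / a n 0] with hw
    have hrw : pprod (fun j => Cmat a c1 c2 m n j) (k+1) *ᵥ ![(-1 : ℝ), (m : ℝ) / a n 0]
        = Cmat a c1 c2 m n k *ᵥ w := by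
      rw [pprod, ← Matrix.mulVec_mulVec, hw]
    have hc1p := (hc1 n k).1
    have hc2p := (hc2 n k).1
    have hA := ha (n+1) k
    have hB := ha n (k+1)
    rw [hrw]
    constructor
    · show (Cmat a c1 c2 m n k *ᵥ w) 0 < 0
      simp only [Cmat, Matrix.mulVec, dotProduct, Fin.sum_univ_two,
        Matrix.cons_val', Matrix.cons_val_zero, Matrix.cons_val_one, Matrix.head_cons,
        Matrix.empty_val', Matrix.cons_val_fin_one, Matrix.head_fin_const, Matrix.of_apply]
      have t1 : (1 / c1 n k) * w 0 < 0 :=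
        mul_neg_of_pos_of_neg (by positivity) h0
      have t2 : (-(m : ℝ) / (a (n + 1) k * c1 n k)) * w 1 < 0 :=
        mul_neg_of_neg_of_pos (div_neg_of_neg_of_pos (by linarith) (by positivity)) h1
      linarith
    · show 0 < (Cmat a c1 c2 m n k *ᵥ w) 1
      simp only [Cmat, Matrix.mulVec, dotProduct, Fin.sum_univ_two,
        Matrix.cons_val', Matrix.cons_val_zero, Matrix.cons_val_one, Matrix.head_cons,
        Matrix.empty_val', Matrix.cons_val_fin_one, Matrix.head_fin_const, Matrix.of_apply]
      have t1 : 0 < (-(m : ℝ) / (a n (k+1) * c1 n k)) * w 0 :=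
        mul_pos_of_neg_of_neg (div_neg_of_neg_of_pos (by linarith) (by positivity)) h0
      have t2 : 0 < (c2 n k + (m : ℝ) ^ 2 / (a n (k + 1) * a (n + 1) k * c1 n k)) * w 1 :=
        mul_pos (by positivity) h1
      linarith
end

section
/- Let m > 0 and let K(k) satisfy the backward recurrence K(k) = C_{m,n}(k)^{-1}K(k+1) with K^{(1)}(k), K^{(2)}(k) > 0 for all k, and let I(k) satisfy I(k+1) = C_{m,n}(k)I(k) with I^{(1)}(k) < 0, I^{(2)}(k) > 0. Then for all k: −I^{(1)}(k) < −I^{(1)}(k+1); I^{(2)}(k) < (1/c_{2,n}(k)) I^{(2)}(k+1); K^{(1)}(k+1) < (1/c_{1,n}(k)) K^{(1)}(k); and K^{(2)}(k+1) < K^{(2)}(k). In particular K^{(2)} is strictly decreasing and −I^{(1)} is strictly increasing. -/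
open Matrix Filter Finset

set_option maxHeartbeats 1000000 in
theorem stmt_11 (a c1 c2 : ℕ → ℕ → ℝ)
    (ha : ∀ n k, 0 < a n k)
    (hc1 : ∀ n k, 0 < c1 n k ∧ c1 n k ≤ 1)
    (hc2 : ∀ n k, 0 < c2 n k ∧ c2 n k ≤ 1)
    (m : ℤ) (hm : 0 < m) (n : ℕ)
    (I K : ℕ → Fin 2 → ℝ)
    (hK : ∀ k, K k = (Cmat a c1 c2 m n k)⁻¹ *ᵥ K (k + 1))
    (hK1 : ∀ k, 0 < K k 0) (hK2 : ∀ k, 0 < K k 1)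
    (hI : ∀ k, I (k + 1) = Cmat a c1 c2 m n k *ᵥ I k)
    (hI1 : ∀ k, I k 0 < 0) (hI2 : ∀ k, 0 < I k 1) :
    ∀ k,
      -I k 0 < -I (k + 1) 0 ∧
      I k 1 < (1 / c2 n k) * I (k + 1) 1 ∧
      K (k + 1) 0 < (1 / c1 n k) * K k 0 ∧
      K (k + 1) 1 < K k 1 := by
  have hconv : ∀ x y c : ℝ, 0 < c → c * x < y → x < 1 / c * y := by
    intro x y c hc h
    rw [one_div, ← div_eq_inv_mul, lt_div_iff₀ hc]
    linarith
  intro k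
  obtain ⟨hC1, hC1le⟩ := hc1 n k
  obtain ⟨hC2, hC2le⟩ := hc2 n k
  have hA := ha n (k + 1)
  have hB := ha (n + 1) k
  have hp : (0 : ℝ) < (m : ℝ) := by exact_mod_cast hm
  have hAne := hA.ne'
  have hBne := hB.ne'
  have hC1ne := hC1.ne'
  have hC2ne := hC2.ne'
  -- determinant
  have hdet : (Cmat a c1 c2 m n k).det = c2 n k / c1 n k := by
    simp only [Cmat, Matrix.det_fin_two_of]
    field_simp
    ring
  have hdet0 : (Cmat a c1 c2 m n k).det ≠ 0 := by
    rw [hdet]; positivity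
  have hKrec : K (k + 1) = Cmat a c1 c2 m n k *ᵥ K k := by
    rw [hK k, Matrix.mulVec_mulVec, Matrix.mul_nonsing_inv _ (isUnit_iff_ne_zero.mpr hdet0), Matrix.one_mulVec]
  -- component formulas
  have hK0 : K (k + 1) 0 = 1 / c1 n k * K k 0 +
      -(m : ℝ) / (a (n + 1) k * c1 n k) * K k 1 := by
    rw [hKrec]; simp [Cmat, Matrix.mulVec, dotProduct, Fin.sum_univ_two]
  have hK1e : K (k + 1) 1 = -(m : ℝ) / (a n (k + 1) * c1 n k) * K k 0 +
      (c2 n k + (m : ℝ) ^ 2 / (a n (k + 1) * a (n + 1) k * c1 n k)) * K k 1 := by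
    rw [hKrec]; simp [Cmat, Matrix.mulVec, dotProduct, Fin.sum_univ_two]
  have hI0 : I (k + 1) 0 = 1 / c1 n k * I k 0 +
      -(m : ℝ) / (a (n + 1) k * c1 n k) * I k 1 := by
    rw [hI k]; simp [Cmat, Matrix.mulVec, dotProduct, Fin.sum_univ_two]
  have hI1e : I (k + 1) 1 = -(m : ℝ) / (a n (k + 1) * c1 n k) * I k 0 +
      (c2 n k + (m : ℝ) ^ 2 / (a n (k + 1) * a (n + 1) k * c1 n k)) * I k 1 := by
    rw [hI k]; simp [Cmat, Matrix.mulVec, dotProduct, Fin.sum_univ_two]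
  -- denominator-free forms
  have e0K : a (n + 1) k * c1 n k * K (k + 1) 0 =
      a (n + 1) k * K k 0 - (m : ℝ) * K k 1 := by
    rw [hK0]; field_simp; ring
  have e1K : a n (k + 1) * a (n + 1) k * c1 n k * K (k + 1) 1 =
      a n (k + 1) * a (n + 1) k * c1 n k * c2 n k * K k 1 +
      (m : ℝ) ^ 2 * K k 1 - (m : ℝ) * a (n + 1) k * K k 0 := by
    rw [hK1e]; field_simp; ring
  have e0I : a (n + 1) k * c1 n k * I (k + 1) 0 =
      a (n + 1) k * I k 0 - (m : ℝ) * I k 1 := by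
    rw [hI0]; field_simp; ring
  have e1I : a n (k + 1) * a (n + 1) k * c1 n k * I (k + 1) 1 =
      a n (k + 1) * a (n + 1) k * c1 n k * c2 n k * I k 1 +
      (m : ℝ) ^ 2 * I k 1 - (m : ℝ) * a (n + 1) k * I k 0 := by
    rw [hI1e]; field_simp; ring
  have hBC1 : 0 < a (n + 1) k * c1 n k := mul_pos hB hC1
  have hABC1 : 0 < a n (k + 1) * a (n + 1) k * c1 n k := mul_pos (mul_pos hA hB) hC1
  refine ⟨?_, ?_, ?_, ?_⟩
  · -- -I k 0 < -I (k+1) 0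
    have h1 : 0 ≤ a (n + 1) k * (1 - c1 n k) * (-I k 0) :=
      mul_nonneg (mul_nonneg hB.le (by linarith)) (by linarith [hI1 k])
    nlinarith [e0I, h1, mul_pos hp (hI2 k), hBC1]
  · -- I k 1 < (1/c2) * I (k+1) 1
    refine hconv _ _ _ hC2 ?_
    nlinarith [e1I, mul_pos (mul_pos hp hB) (neg_pos.mpr (hI1 k)),
      mul_pos (mul_pos hp hp) (hI2 k), hABC1]
  · -- K (k+1) 0 < (1/c1) * K k 0
    refine hconv _ _ _ hC1 ?_
    nlinarith [e0K, mul_pos hp (hK2 k), hB]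
  · -- K (k+1) 1 < K k 1
    have hq : 0 < a (n + 1) k * K k 0 - (m : ℝ) * K k 1 := by
      have := mul_pos hBC1 (hK1 (k + 1))
      linarith [e0K]
    nlinarith [e1K, mul_pos hp hq, hABC1,
      mul_nonneg (mul_nonneg hABC1.le (hK2 k).le) (sub_nonneg.mpr hC2le)]
end

section
/- Let m > 0 and let I(k) satisfy I(k+1) = C_{m,n}(k)I(k), I(0) = (−1, m/a_n(0))^T, with I^{(1)}(k) < 0 and I^{(2)}(k) > 0 for all k. Then for all k ≥ 0: I^{(2)}(k) ≤ m · ε(m,n) · (−I^{(1)}(k+1)), where ε(m,n) = ∑_{k=0}^∞ a_{n+1}(k)/(m² + a_n(k) a_{n+1}(k)). -/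
open Matrix Filter Finset

/-! Write `u k = -I k 0` and `v k = I k 1`. Since `0 < c₁, c₂ ≤ 1`, the recursion gives
`u k + (m / a_{n+1}(k)) v k ≤ u (k+1)` and `v (k+1) ≤ (m / a_n(k+1)) u (k+1) + v k`.
With `g t = t / (1 + β t)`, `β = m / a_{n+1}(k)`, the ratio `r k = v k / u (k+1)` then obeys
`r k ≤ g (m / a_n(k) + r (k-1)) ≤ g (m / a_n(k)) + r (k-1)`, by monotonicity and subadditivity
of `g`, and `m · g (m / a_n(k))` is the `k`-th term of `ε(m,n)`. Telescoping bounds `r k` by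
`m` times a partial sum of `ε(m,n)`, which converges because its terms are at most `1 / a_n(k)`. -/

section RatioBound

lemma div_one_add_mul_le_div_one_add_mul {β s t : ℝ} (hβ : 0 ≤ β) (hs : 0 ≤ s) (hst : s ≤ t) :
    s / (1 + β * s) ≤ t / (1 + β * t) := by
  have ht : 0 ≤ t := hs.trans hst
  rw [div_le_div_iff₀ (by positivity) (by positivity)]
  nlinarith

lemma add_div_one_add_mul_le {β s t : ℝ} (hβ : 0 ≤ β) (hs : 0 ≤ s) (ht : 0 ≤ t) :
    (s + t) / (1 + β * (s + t)) ≤ s / (1 + β * s) + t := by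
  have hpos : 0 < 1 + β * s := by positivity
  have hle : 1 + β * s ≤ 1 + β * (s + t) := by nlinarith
  rw [add_div]
  gcongr
  exact div_le_self ht (by nlinarith)

variable {m A B u u' v r : ℝ}

lemma div_le_add_of_le_mul_of_add_le (hm : 0 < m) (hA : 0 < A) (hB : 0 < B) (hu : 0 < u)
    (hv : 0 ≤ v) (hr : 0 ≤ r) (hv_le : v ≤ (m / A + r) * u) (hu_le : u + m / B * v ≤ u') :
    v / u' ≤ m * (B / (m ^ 2 + A * B)) + r := by
  have hβ : 0 ≤ m / B := by positivity
  have hmA : 0 ≤ m / A := by positivity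
  have hvu : v / u ≤ m / A + r := (div_le_iff₀ hu).2 hv_le
  have hterm : m / A / (1 + m / B * (m / A)) = m * (B / (m ^ 2 + A * B)) := by
    field_simp
    ring
  calc v / u' ≤ v / (u + m / B * v) := by gcongr
    _ = v / u / (1 + m / B * (v / u)) := by field_simp
    _ ≤ (m / A + r) / (1 + m / B * (m / A + r)) :=
      div_one_add_mul_le_div_one_add_mul hβ (by positivity) hvu
    _ ≤ m / A / (1 + m / B * (m / A)) + r := add_div_one_add_mul_le hβ hmA hr
    _ = m * (B / (m ^ 2 + A * B)) + r := by rw [hterm]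

end RatioBound

section Telescoping

variable {m : ℝ} {A B u v : ℕ → ℝ}

lemma div_le_mul_sum_of_recursion (hm : 0 < m) (hA : ∀ k, 0 < A k) (hB : ∀ k, 0 < B k)
    (hu : ∀ k, 0 < u k) (hv : ∀ k, 0 ≤ v k) (hv_zero : v 0 ≤ m / A 0 * u 0)
    (hv_succ : ∀ k, v (k + 1) ≤ m / A (k + 1) * u (k + 1) + v k)
    (hu_succ : ∀ k, u k + m / B k * v k ≤ u (k + 1)) (k : ℕ) :
    v k / u (k + 1) ≤ m * ∑ j ∈ range (k + 1), B j / (m ^ 2 + A j * B j) := by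
  induction k with
  | zero =>
    have h := div_le_add_of_le_mul_of_add_le hm (hA 0) (hB 0) (hu 0) (hv 0) le_rfl
      (by simpa using hv_zero) (hu_succ 0)
    simpa using h
  | succ k ih =>
    have hv_le : v (k + 1) ≤ (m / A (k + 1) + v k / u (k + 1)) * u (k + 1) := by
      rw [add_mul, div_mul_cancel₀ _ (hu (k + 1)).ne']
      exact hv_succ k
    calc v (k + 1) / u (k + 2)
        ≤ m * (B (k + 1) / (m ^ 2 + A (k + 1) * B (k + 1))) + v k / u (k + 1) :=
          div_le_add_of_le_mul_of_add_le hm (hA _) (hB _) (hu _) (hv _)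
            (div_nonneg (hv k) (hu _).le) hv_le (hu_succ _)
      _ ≤ m * (B (k + 1) / (m ^ 2 + A (k + 1) * B (k + 1))) +
            m * ∑ j ∈ range (k + 1), B j / (m ^ 2 + A j * B j) := by gcongr
      _ = m * ∑ j ∈ range (k + 2), B j / (m ^ 2 + A j * B j) := by
          rw [sum_range_succ _ (k + 1)]
          ring

end Telescoping

lemma summable_div_sq_add_mul {m : ℝ} {A B : ℕ → ℝ} (hA : ∀ k, 0 < A k) (hB : ∀ k, 0 < B k)
    (hsum : Summable fun k => 1 / A k) : Summable fun k => B k / (m ^ 2 + A k * B k) := by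
  refine hsum.of_nonneg_of_le (fun k => ?_) (fun k => ?_)
  · have := hA k; have := hB k; positivity
  · have := hA k; have := hB k
    rw [div_le_div_iff₀ (by positivity) (hA k)]
    nlinarith [sq_nonneg m]

section CmatMulVec

variable {a c1 c2 : ℕ → ℕ → ℝ} {m : ℤ} {n k : ℕ} {x : Fin 2 → ℝ}

lemma Cmat_mulVec_zero :
    (Cmat a c1 c2 m n k *ᵥ x) 0 = (x 0 - m / a (n + 1) k * x 1) / c1 n k := by
  simp only [Cmat, mulVec, dotProduct, Fin.sum_univ_two, of_apply, cons_val', cons_val_zero,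
    cons_val_one]
  ring

lemma Cmat_mulVec_one :
    (Cmat a c1 c2 m n k *ᵥ x) 1 =
      -(m / a n (k + 1)) * (Cmat a c1 c2 m n k *ᵥ x) 0 + c2 n k * x 1 := by
  simp only [Cmat, mulVec, dotProduct, Fin.sum_univ_two, of_apply, cons_val', cons_val_zero,
    cons_val_one]
  ring

lemma add_le_neg_Cmat_mulVec_zero (hc1 : 0 < c1 n k ∧ c1 n k ≤ 1)
    (hx : 0 ≤ -x 0 + m / a (n + 1) k * x 1) :
    -x 0 + m / a (n + 1) k * x 1 ≤ -(Cmat a c1 c2 m n k *ᵥ x) 0 := by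
  rw [Cmat_mulVec_zero, ← neg_div, neg_sub', sub_neg_eq_add]
  exact le_div_self hx hc1.1 hc1.2

lemma Cmat_mulVec_one_le (hc2 : c2 n k ≤ 1) (hx : 0 ≤ x 1) :
    (Cmat a c1 c2 m n k *ᵥ x) 1 ≤ m / a n (k + 1) * -(Cmat a c1 c2 m n k *ᵥ x) 0 + x 1 := by
  rw [Cmat_mulVec_one, neg_mul, mul_neg]
  gcongr
  exact mul_le_of_le_one_left hx hc2

end CmatMulVec

theorem stmt_13 (a c1 c2 : ℕ → ℕ → ℝ)
    (ha : ∀ n k, 0 < a n k)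
    (hsum : ∀ n, Summable fun k => 1 / a n k)
    (hc1 : ∀ n k, 0 < c1 n k ∧ c1 n k ≤ 1)
    (hc2 : ∀ n k, 0 < c2 n k ∧ c2 n k ≤ 1)
    (m : ℤ) (hm : 0 < m) (n : ℕ)
    (I : ℕ → Fin 2 → ℝ)
    (hIrec : ∀ k, I (k + 1) = Cmat a c1 c2 m n k *ᵥ I k)
    (hI0 : I 0 = ![(-1 : ℝ), (m : ℝ) / a n 0])
    (hI1 : ∀ k, I k 0 < 0) (hI2 : ∀ k, 0 < I k 1) :
    ∀ k, I k 1 ≤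
      (m : ℝ) * (∑' j, a (n + 1) j / ((m : ℝ) ^ 2 + a n j * a (n + 1) j)) *
        (-I (k + 1) 0) := by
  have hm' : (0 : ℝ) < m := by exact_mod_cast hm
  have hu : ∀ k, 0 < -I k 0 := fun k => neg_pos.2 (hI1 k)
  have hu_succ : ∀ k, -I k 0 + m / a (n + 1) k * I k 1 ≤ -I (k + 1) 0 := fun k => by
    rw [hIrec]
    refine add_le_neg_Cmat_mulVec_zero (hc1 n k) (add_nonneg (hu k).le ?_)
    have := ha (n + 1) k; have := hI2 k; positivity
  have hv_succ : ∀ k, I (k + 1) 1 ≤ m / a n (k + 1) * -I (k + 1) 0 + I k 1 := fun k => by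
    rw [hIrec]
    exact Cmat_mulVec_one_le (hc2 n k).2 (hI2 k).le
  intro k
  have hratio := div_le_mul_sum_of_recursion hm' (ha n) (ha (n + 1)) hu (fun k => (hI2 k).le)
    (by simp [hI0]) hv_succ hu_succ k
  calc I k 1 ≤ m * (∑ j ∈ range (k + 1), a (n + 1) j / ((m : ℝ) ^ 2 + a n j * a (n + 1) j)) *
        (-I (k + 1) 0) := (div_le_iff₀ (hu (k + 1))).1 hratio
    _ ≤ _ := by
      gcongr
      · exact (hu _).le
      · exact (summable_div_sq_add_mul (ha n) (ha (n + 1)) (hsum n)).sum_le_tsum _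
          fun j _ => by have := ha n j; have := ha (n + 1) j; positivity
end

section
/- Let m > 0 and let K(k) be a positive solution of the backward recurrence K(k) = C_{m,n}(k)^{-1} K(k+1) with K(k) → K(∞) as k → ∞, K^{(1)}(k), K^{(2)}(k) > 0. Then for all k, n: ∑_{i=k+1}^∞ (∏_{j=0}^{i-2} c_{1,n}(j)) K^{(2)}(i−1)/a_{n+1}(i−1) ≤ (1/m) (∏_{j=0}^{k-1} c_{1,n}(j)) K^{(1)}(k), and ∑_{i=k+1}^∞ K^{(1)}(i)/a_n(i) ≤ (1/m) K^{(2)}(k). -/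
open Matrix Filter Finset

/-!
Writing `x = K k`, `y = K (k + 1)` (so `x₁ = K k 0 = K^{(1)}(k)`, `x₂ = K k 1 = K^{(2)}(k)`), the two
components of `C_{m,n}(k) x = y` read `m x₂ / a_{n+1}(k) = x₁ - c₁ y₁` and
`m y₁ / a_n(k+1) = c₂ x₂ - y₂ ≤ x₂ - y₂`.
Multiplied by `∏_{j<k} c₁(j)`, the first makes the terms of the first series an exact telescoping
difference; the second bounds the terms of the second series by one. As all the telescoped
quantities are positive, every partial sum is bounded by the first of them.
-/

theorem summable_and_tsum_le_of_le_sub_succ {f g : ℕ → ℝ} (hf : ∀ l, 0 ≤ f l)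
    (hg : ∀ l, 0 ≤ g l) (hfg : ∀ l, f l ≤ g l - g (l + 1)) :
    Summable f ∧ ∑' l, f l ≤ g 0 := by
  have hpartial : ∀ N, ∑ l ∈ range N, f l ≤ g 0 := fun N =>
    calc ∑ l ∈ range N, f l ≤ ∑ l ∈ range N, (g l - g (l + 1)) := sum_le_sum fun l _ => hfg l
      _ = g 0 - g N := sum_range_sub' g N
      _ ≤ g 0 := sub_le_self _ (hg N)
  have hsum := summable_of_sum_range_le hf hpartial
  exact ⟨hsum, hsum.tsum_le_of_sum_range_le hpartial⟩

theorem Matrix.mulVec_eq_of_eq_inv_mulVec {ι R : Type*} [Fintype ι] [DecidableEq ι] [CommRing R]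
    {A : Matrix ι ι R} (hA : IsUnit A.det) {x y : ι → R} (h : x = A⁻¹ *ᵥ y) : A *ᵥ x = y := by
  rw [h, mulVec_mulVec, mul_nonsing_inv _ hA, one_mulVec]

section Cmat

variable {a c1 c2 : ℕ → ℕ → ℝ} {m : ℤ} {n k : ℕ}

theorem Cmat_det (ha0 : a n (k + 1) ≠ 0) (ha1 : a (n + 1) k ≠ 0) (hc1 : c1 n k ≠ 0) :
    (Cmat a c1 c2 m n k).det = c2 n k / c1 n k := by
  simp only [Cmat, det_fin_two_of]
  field_simp
  ring

theorem Cmat_mulVec_eq_apply_zero {x y : Fin 2 → ℝ} (h : Cmat a c1 c2 m n k *ᵥ x = y)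
    (ha1 : a (n + 1) k ≠ 0) (hc1 : c1 n k ≠ 0) :
    (m : ℝ) * x 1 / a (n + 1) k = x 0 - c1 n k * y 0 := by
  have h0 := congrFun h 0
  simp only [mulVec, dotProduct, Cmat, one_div, Fin.isValue, of_apply, cons_val', cons_val_fin_one,
    cons_val_zero, Fin.sum_univ_two, cons_val_one] at h0
  rw [← h0]
  field_simp
  ring

theorem Cmat_mulVec_eq_apply_one {x y : Fin 2 → ℝ} (h : Cmat a c1 c2 m n k *ᵥ x = y)
    (ha0 : a n (k + 1) ≠ 0) (ha1 : a (n + 1) k ≠ 0) (hc1 : c1 n k ≠ 0) :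
    (m : ℝ) * y 0 / a n (k + 1) = c2 n k * x 1 - y 1 := by
  have h0 := congrFun h 0
  have h1 := congrFun h 1
  simp only [mulVec, dotProduct, Cmat, one_div, Fin.isValue, of_apply, cons_val', cons_val_fin_one,
    cons_val_zero, Fin.sum_univ_two, cons_val_one] at h0 h1
  rw [← h0, ← h1]
  field_simp
  ring

end Cmat

theorem stmt_14_general (a c1 c2 : ℕ → ℕ → ℝ)
    (ha : ∀ n k, 0 < a n k)
    (hc1 : ∀ n k, 0 < c1 n k ∧ c1 n k ≤ 1)
    (hc2 : ∀ n k, 0 < c2 n k ∧ c2 n k ≤ 1)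
    (m : ℤ) (hm : 0 < m) (n : ℕ)
    (K : ℕ → Fin 2 → ℝ)
    (hKrec : ∀ k, K k = (Cmat a c1 c2 m n k)⁻¹ *ᵥ K (k + 1))
    (hK1 : ∀ k, 0 < K k 0) (hK2 : ∀ k, 0 < K k 1) :
    ∀ k : ℕ,
      Summable (fun l : ℕ =>
        (∏ j ∈ Finset.range (l + k), c1 n j) * K (l + k) 1 / a (n + 1) (l + k)) ∧
      (∑' l : ℕ,
        (∏ j ∈ Finset.range (l + k), c1 n j) * K (l + k) 1 / a (n + 1) (l + k)) ≤
        (1 / (m : ℝ)) * (∏ j ∈ Finset.range k, c1 n j) * K k 0 ∧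
      Summable (fun l : ℕ => K (l + k + 1) 0 / a n (l + k + 1)) ∧
      (∑' l : ℕ, K (l + k + 1) 0 / a n (l + k + 1)) ≤ (1 / (m : ℝ)) * K k 1 := by
  intro k
  have hm : (0 : ℝ) < m := by exact_mod_cast hm
  have hC : ∀ i, Cmat a c1 c2 m n i *ᵥ K i = K (i + 1) := fun i =>
    mulVec_eq_of_eq_inv_mulVec (by
      rw [Cmat_det (ha _ _).ne' (ha _ _).ne' (hc1 n i).1.ne']
      exact (div_pos (hc2 n i).1 (hc1 n i).1).ne'.isUnit) (hKrec i)
  have hP : ∀ l, 0 < ∏ j ∈ range l, c1 n j := fun l => prod_pos fun j _ => (hc1 n j).1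
  obtain ⟨hsum₁, htsum₁⟩ := summable_and_tsum_le_of_le_sub_succ
    (f := fun l => (∏ j ∈ range (l + k), c1 n j) * K (l + k) 1 / a (n + 1) (l + k))
    (g := fun l => 1 / (m : ℝ) * (∏ j ∈ range (l + k), c1 n j) * K (l + k) 0)
    (fun l => (div_pos (mul_pos (hP _) (hK2 _)) (ha _ _)).le)
    (fun l => (mul_pos (mul_pos (one_div_pos.2 hm) (hP _)) (hK1 _)).le)
    (fun l => by
      have e := Cmat_mulVec_eq_apply_zero (hC (l + k)) (ha _ _).ne' (hc1 n _).1.ne'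
      rw [add_right_comm l 1 k, prod_range_succ]
      field_simp
      linear_combination (∏ j ∈ range (l + k), c1 n j) * e)
  obtain ⟨hsum₂, htsum₂⟩ := summable_and_tsum_le_of_le_sub_succ
    (f := fun l => K (l + k + 1) 0 / a n (l + k + 1))
    (g := fun l => 1 / (m : ℝ) * K (l + k) 1)
    (fun l => (div_pos (hK1 _) (ha _ _)).le)
    (fun l => (mul_pos (one_div_pos.2 hm) (hK2 _)).le)
    (fun l => by
      have e := Cmat_mulVec_eq_apply_one (hC (l + k)) (ha _ _).ne' (ha _ _).ne' (hc1 n _).1.ne'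
      have : c2 n (l + k) * K (l + k) 1 ≤ K (l + k) 1 :=
        mul_le_of_le_one_left (hK2 _).le (hc2 n _).2
      rw [add_right_comm l 1 k, ← mul_sub]
      calc K (l + k + 1) 0 / a n (l + k + 1)
          = 1 / (m : ℝ) * ((m : ℝ) * K (l + k + 1) 0 / a n (l + k + 1)) := by field_simp
        _ ≤ 1 / (m : ℝ) * (K (l + k) 1 - K (l + k + 1) 1) := by
          rw [e]; gcongr)
  simp only [zero_add] at htsum₁ htsum₂
  exact ⟨hsum₁, htsum₁, hsum₂, htsum₂⟩

theorem stmt_14 (a c1 c2 : ℕ → ℕ → ℝ)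
    (ha : ∀ n k, 0 < a n k)
    (hsum : ∀ n, Summable fun k => 1 / a n k)
    (hc1 : ∀ n k, 0 < c1 n k ∧ c1 n k ≤ 1)
    (hc2 : ∀ n k, 0 < c2 n k ∧ c2 n k ≤ 1)
    (m : ℤ) (hm : 0 < m) (n : ℕ)
    (K : ℕ → Fin 2 → ℝ) (Kinf : Fin 2 → ℝ)
    (hKrec : ∀ k, K k = (Cmat a c1 c2 m n k)⁻¹ *ᵥ K (k + 1))
    (hKlim : Tendsto K atTop (nhds Kinf))
    (hK1 : ∀ k, 0 < K k 0) (hK2 : ∀ k, 0 < K k 1) :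
    ∀ k : ℕ,
      Summable (fun l : ℕ =>
        (∏ j ∈ Finset.range (l + k), c1 n j) * K (l + k) 1 / a (n + 1) (l + k)) ∧
      (∑' l : ℕ,
        (∏ j ∈ Finset.range (l + k), c1 n j) * K (l + k) 1 / a (n + 1) (l + k)) ≤
        (1 / (m : ℝ)) * (∏ j ∈ Finset.range k, c1 n j) * K k 0 ∧
      Summable (fun l : ℕ => K (l + k + 1) 0 / a n (l + k + 1)) ∧
      (∑' l : ℕ, K (l + k + 1) 0 / a n (l + k + 1)) ≤ (1 / (m : ℝ)) * K k 1 :=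
  stmt_14_general a c1 c2 ha hc1 hc2 m hm n K hKrec hK1 hK2
end

section
/- If a two-sided homogeneous solution h(k) of the matrix recurrence h(k+1) = C_{m,n}(k) h(k) satisfies both the initial regularity condition a_n(0) h₂(0) + m h₁(0) = 0 and the boundary condition that h(∞) := lim_{k→∞} h(k) is a scalar multiple of K(∞), where I(k) and K(k) are linearly independent solutions with I(0) proportional to (−1, m/a_n(0)) and I(∞), K(∞) linearly independent, then h(k) = 0 for all k. -/
/-!
The initial condition cuts out the line spanned by `I 0`, so `h 0 = α • I 0` with `α = -h 0 0`,
and uniqueness of solutions gives `h = α • I`. Passing to the limit, `α • I(∞) = h(∞) = β • K(∞)`,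
and the linear independence of `I(∞), K(∞)` forces `α = 0`.
-/

open Matrix Filter

theorem Matrix.mulVec_recurrence_eq_smul {R ι : Type*} [CommSemiring R] [Fintype ι]
    (A : ℕ → Matrix ι ι R) {u v : ℕ → ι → R}
    (hu : ∀ k, u (k + 1) = A k *ᵥ u k) (hv : ∀ k, v (k + 1) = A k *ᵥ v k)
    {c : R} (h₀ : u 0 = c • v 0) (k : ℕ) : u k = c • v k := by
  induction k with
  | zero => exact h₀
  | succ k ih => rw [hu, hv, ih, mulVec_smul]

theorem eq_smul_of_mul_add_mul_eq_zero {K : Type*} [Field K] {a b : K} (ha : a ≠ 0)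
    {v : Fin 2 → K} (hv : a * v 1 + b * v 0 = 0) : v = (-v 0) • ![-1, b / a] := by
  ext i
  fin_cases i
  · simp
  · simp only [Fin.mk_one, Pi.smul_apply, Matrix.cons_val_one, Matrix.cons_val_zero, smul_eq_mul]
    field_simp
    linear_combination hv

theorem stmt_18_general (a : ℕ → ℕ → ℝ) (ha : ∀ n k, 0 < a n k)
    (m : ℤ) (n : ℕ)
    (C : ℕ → Matrix (Fin 2) (Fin 2) ℝ)
    (I : ℕ → Fin 2 → ℝ) (Iinf Kinf : Fin 2 → ℝ)
    (hIrec : ∀ k, I (k + 1) = C k *ᵥ I k)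
    (hI0 : I 0 = ![(-1 : ℝ), (m : ℝ) / a n 0])
    (hIlim : Tendsto I atTop (nhds Iinf))
    (hIKinf : LinearIndependent ℝ ![Iinf, Kinf])
    (h : ℕ → Fin 2 → ℝ) (hinf : Fin 2 → ℝ)
    (hrec : ∀ k, h (k + 1) = C k *ᵥ h k)
    (hinit : a n 0 * h 0 1 + (m : ℝ) * h 0 0 = 0)
    (hlim : Tendsto h atTop (nhds hinf))
    (hbc : ∃ β : ℝ, hinf = β • Kinf) :
    ∀ k, h k = 0 := by
  obtain ⟨β, hβ⟩ := hbc
  have h₀ : h 0 = (-h 0 0) • I 0 := hI0 ▸ eq_smul_of_mul_add_mul_eq_zero (ha n 0).ne' hinit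
  have hk := mulVec_recurrence_eq_smul C hrec hIrec h₀
  have hinf_eq : hinf = (-h 0 0) • Iinf :=
    tendsto_nhds_unique hlim ((hIlim.const_smul _).congr fun k ↦ (hk k).symm)
  have hα : -h 0 0 = 0 := (hIKinf.eq_zero_of_pair' (hinf_eq.symm.trans hβ)).1
  intro k
  rw [hk k, hα, zero_smul]

theorem stmt_18 (a : ℕ → ℕ → ℝ) (ha : ∀ n k, 0 < a n k)
    (m : ℤ) (n : ℕ)
    (C : ℕ → Matrix (Fin 2) (Fin 2) ℝ)
    (hCinv : ∀ k, IsUnit (C k))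
    (I K : ℕ → Fin 2 → ℝ) (Iinf Kinf : Fin 2 → ℝ)
    (hIrec : ∀ k, I (k + 1) = C k *ᵥ I k)
    (hKrec : ∀ k, K (k + 1) = C k *ᵥ K k)
    (hI0 : I 0 = ![(-1 : ℝ), (m : ℝ) / a n 0])
    (hIK : ∀ k, LinearIndependent ℝ ![I k, K k])
    (hIlim : Tendsto I atTop (nhds Iinf))
    (hKlim : Tendsto K atTop (nhds Kinf))
    (hIKinf : LinearIndependent ℝ ![Iinf, Kinf])
    (h : ℕ → Fin 2 → ℝ) (hinf : Fin 2 → ℝ)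
    (hrec : ∀ k, h (k + 1) = C k *ᵥ h k)
    (hinit : a n 0 * h 0 1 + (m : ℝ) * h 0 0 = 0)
    (hlim : Tendsto h atTop (nhds hinf))
    (hbc : ∃ β : ℝ, hinf = β • Kinf) :
    ∀ k, h k = 0 :=
  stmt_18_general a ha m n C I Iinf Kinf hIrec hI0 hIlim hIKinf h hinf hrec hinit hlim hbc
end
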